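/- arXiv:2102.07126 — 3 statements merged into one kernel-verified Lean document; each statement's English description precedes it below -/
import Mathlib

section
/- Let G be a noncompact locally compact second countable group and H a noncompact closed subgroup of G. If the pair H ⊆ G has property (T), then every measure-preserving Borel G-action S = (S_g)_{g∈G} on a σ-finite infinite standard measure space (Y, ν) such that the restricted H-action (S_h)_{h∈H} admits no H-invariant measurable subset of positive finite measure, admits no S-Følner sequence. -/
open MeasureTheory Filter Topology Set ENNReal

noncomputable section

section ActionDefs

variable {G X : Type*}

/-- A Borel action of a group `G` on a measurable space `X`. -/
def IsBorelAction [Group G] [MeasurableSpace G] [MeasurableSpace X]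
    (T : G → X → X) : Prop :=
  Measurable (Function.uncurry T) ∧ (∀ x, T 1 x = x) ∧ ∀ g h x, T (g * h) x = T g (T h x)

/-- A measure-preserving Borel action. -/
def IsMPAction [Group G] [MeasurableSpace G] [MeasurableSpace X]
    (μ : Measure X) (T : G → X → X) : Prop :=
  IsBorelAction T ∧ ∀ g, MeasurePreserving (T g) μ μ

/-- A nonsingular Borel action: each `μ ∘ T g` is mutually absolutely continuous with `μ`. -/
def IsNonsingularAction [Group G] [MeasurableSpace G] [MeasurableSpace X]
    (μ : Measure X) (T : G → X → X) : Prop :=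
  IsBorelAction T ∧ ∀ g, μ.map (T g) ≪ μ ∧ μ ≪ μ.map (T g)

/-- An action is of 0-type if `μ (T g A ∩ B) → 0` as `g → ∞` along the cocompact filter,
for all sets `A`, `B` of finite measure. -/
def IsZeroType [Group G] [MeasurableSpace G] [TopologicalSpace G] [MeasurableSpace X]
    (μ : Measure X) (T : G → X → X) : Prop :=
  ∀ A B : Set X, MeasurableSet A → MeasurableSet B → μ A ≠ ∞ → μ B ≠ ∞ →
    Tendsto (fun g : G => μ (T g '' A ∩ B)) (cocompact G) (𝓝 0)

/-- A probability-preserving action is mixing if `μ (T g A ∩ B) → μ A * μ B` as `g → ∞`. -/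
def IsMixingAction [Group G] [MeasurableSpace G] [TopologicalSpace G] [MeasurableSpace X]
    (μ : Measure X) (T : G → X → X) : Prop :=
  ∀ A B : Set X, MeasurableSet A → MeasurableSet B →
    Tendsto (fun g : G => μ (T g '' A ∩ B)) (cocompact G) (𝓝 (μ A * μ B))

/-- A free action: a.e. point has trivial stabilizer. -/
def IsFreeAction [Group G] [MeasurableSpace X] (μ : Measure X) (T : G → X → X) : Prop :=
  ∀ᵐ x ∂μ, ∀ g : G, T g x = x → g = 1

/-- A `T`-Følner sequence of sets of finite positive measure. -/
def IsFolner [Group G] [TopologicalSpace G] [MeasurableSpace X]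
    (μ : Measure X) (T : G → X → X) (A : ℕ → Set X) : Prop :=
  (∀ n, MeasurableSet (A n) ∧ 0 < μ (A n) ∧ μ (A n) ≠ ∞) ∧
    ∀ K : Set G, IsCompact K →
      Tendsto (fun n => ⨆ g ∈ K, μ (symmDiff (T g '' A n) (A n)) / μ (A n)) atTop (𝓝 0)

/-- The restriction of the action to an invariant set `A` is totally dissipative:
there is a measurable subset `W ⊆ A` meeting the orbit of a.e. point of `A` exactly once,
and a.e. point of `A` has compact stabilizer. -/
def IsTotallyDissipativeOn [Group G] [TopologicalSpace G] [MeasurableSpace X]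
    (μ : Measure X) (T : G → X → X) (A : Set X) : Prop :=
  ∃ W : Set X, MeasurableSet W ∧ W ⊆ A ∧
    ∀ᵐ z ∂(μ.restrict A),
      (∃! w, w ∈ W ∧ ∃ g : G, T g z = w) ∧ IsCompact {g : G | T g z = z}

/-- A totally dissipative action. -/
def IsTotallyDissipative [Group G] [TopologicalSpace G] [MeasurableSpace X]
    (μ : Measure X) (T : G → X → X) : Prop :=
  IsTotallyDissipativeOn μ T Set.univ

/-- The restriction of the action to the invariant set `A` is conservative: no invariant
subset of `A` of positive measure on which the action is totally dissipative. -/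
def IsConservativeOn [Group G] [TopologicalSpace G] [MeasurableSpace X]
    (μ : Measure X) (T : G → X → X) (A : Set X) : Prop :=
  ¬ ∃ B : Set X, B ⊆ A ∧ MeasurableSet B ∧ 0 < μ B ∧ (∀ g : G, T g ⁻¹' B = B) ∧
      IsTotallyDissipativeOn μ T B

/-- A conservative action. -/
def IsConservativeAction [Group G] [TopologicalSpace G] [MeasurableSpace X]
    (μ : Measure X) (T : G → X → X) : Prop :=
  IsConservativeOn μ T Set.univ

/-- An ergodic action: every a.e. invariant set is null or conull. -/
def IsErgodicAction [Group G] [MeasurableSpace X] (μ : Measure X) (T : G → X → X) : Prop :=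
  ∀ A : Set X, MeasurableSet A → (∀ g : G, μ (symmDiff (T g '' A) A) = 0) →
    μ A = 0 ∨ μ Aᶜ = 0

/-- A properly ergodic action: ergodic, and the measure is not concentrated on one orbit. -/
def IsProperlyErgodic [Group G] [MeasurableSpace X] (μ : Measure X) (T : G → X → X) : Prop :=
  IsErgodicAction μ T ∧ ¬ ∃ z : X, μ {y | ∃ g : G, T g z = y}ᶜ = 0

/-- A weakly mixing action: the product with every ergodic probability-preserving action
on a standard probability space is ergodic. -/
def IsWeaklyMixingAction [Group G] [MeasurableSpace G] [MeasurableSpace X]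
    (μ : Measure X) (T : G → X → X) : Prop :=
  ∀ (Z : Type) [MeasurableSpace Z] [StandardBorelSpace Z] (κ : Measure Z)
    [IsProbabilityMeasure κ] (R : G → Z → Z),
    IsMPAction κ R → IsErgodicAction κ R →
      IsErgodicAction (μ.prod κ) (fun g p => (T g p.1, R g p.2))

/-- A sharply weak mixing action: properly ergodic, and the product with every ergodic
conservative nonsingular action on a nonatomic standard probability space is either
ergodic or totally dissipative. -/
def IsSharplyWeakMixing [Group G] [MeasurableSpace G] [TopologicalSpace G] [MeasurableSpace X]
    (μ : Measure X) (T : G → X → X) : Prop :=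
  IsProperlyErgodic μ T ∧
    ∀ (Z : Type) [MeasurableSpace Z] [StandardBorelSpace Z] (κ : Measure Z)
      [IsProbabilityMeasure κ] (R : G → Z → Z),
      (∀ z : Z, κ {z} = 0) →
      IsNonsingularAction κ R → IsErgodicAction κ R → IsConservativeAction κ R →
        (IsErgodicAction (μ.prod κ) (fun g p => (T g p.1, R g p.2)) ∨
          IsTotallyDissipative (μ.prod κ) (fun g p => (T g p.1, R g p.2)))

end ActionDefs

/-- A witness for the Haagerup property: a weakly continuous unitary representation of `G`
on a separable complex Hilbert space whose matrix coefficients vanish at infinity and which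
has almost-invariant unit vectors. -/
structure HaagerupWitness (G : Type*) [Group G] [TopologicalSpace G] where
  (E : Type)
  [nacg : NormedAddCommGroup E]
  [ips : InnerProductSpace ℂ E]
  [cs : CompleteSpace E]
  [sct : SecondCountableTopology E]
  (V : G →* (E ≃ₗᵢ[ℂ] E))
  (weak_cont : ∀ ξ η : E, Continuous fun g : G => (inner ℂ (V g ξ) η : ℂ))
  (c0 : ∀ ξ η : E, Tendsto (fun g : G => (inner ℂ (V g ξ) η : ℂ)) (cocompact G) (𝓝 0))
  (almost_inv : ∀ ε : ℝ, 0 < ε → ∀ K : Set G, IsCompact K →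
    ∃ ξ : E, ‖ξ‖ = 1 ∧ ∀ g ∈ K, ‖V g ξ - ξ‖ < ε)

/-- The Haagerup property for a topological group `G`. -/
def HasHaagerupProperty (G : Type*) [Group G] [TopologicalSpace G] : Prop :=
  Nonempty (HaagerupWitness G)

/-- Property (T) for the pair `H ⊆ G`: every weakly continuous unitary representation of `G`
on a separable complex Hilbert space with almost-invariant unit vectors has a nonzero
`H`-invariant vector. -/
def HasPropertyTPair (G : Type*) [Group G] [TopologicalSpace G] (H : Subgroup G) : Prop :=
  ∀ (E : Type) [NormedAddCommGroup E] [InnerProductSpace ℂ E] [CompleteSpace E]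
    [SecondCountableTopology E] (V : G →* (E ≃ₗᵢ[ℂ] E)),
    (∀ ξ η : E, Continuous fun g : G => (inner ℂ (V g ξ) η : ℂ)) →
    (∀ ε : ℝ, 0 < ε → ∀ K : Set G, IsCompact K →
      ∃ ξ : E, ‖ξ‖ = 1 ∧ ∀ g ∈ K, ‖V g ξ - ξ‖ < ε) →
    ∃ η : E, η ≠ 0 ∧ ∀ h ∈ H, V h η = η

/-- The squared Hellinger distance of two measures `α`, `β` with respect to a reference
measure `γ`. -/
def hellingerSq {Y : Type*} [MeasurableSpace Y] (γ α β : Measure Y) : ℝ :=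
  (1 / 2) * ∫ y, (Real.sqrt (α.rnDeriv γ y).toReal - Real.sqrt (β.rnDeriv γ y).toReal) ^ 2 ∂γ

/-- The tail cylinder `𝐁ⁿ = Yⁿ × B n × B (n+1) × ⋯` (with `0`-based indexing): the set of
sequences whose `j`-th coordinate lies in `B j` for every `j ≥ n`. -/
def tailCylinder {Y : Type*} (B : ℕ → Set Y) (n : ℕ) : Set (ℕ → Y) :=
  {x : ℕ → Y | ∀ j, n ≤ j → x j ∈ B j}

/-!
Normalized indicators of a Følner sequence are almost invariant unit vectors for the Koopman
representation of `G` on `L²(ν)`. This representation is measurable and `L²(ν)` is separable, so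
by Steinhaus' theorem it is strongly continuous. Property (T) of the pair therefore gives a nonzero
`H`-invariant `ζ ∈ L²(ν)`; a superlevel set `{t ≤ ‖ζ‖}` of positive measure is then `H`-invariant,
and it has finite measure by Chebyshev's inequality.
-/

open scoped NNReal

section AutomaticContinuity

variable {G R E : Type*} [Group G] [TopologicalSpace G] [IsTopologicalGroup G]
  [LocallyCompactSpace G] [SecondCountableTopology G] [MeasurableSpace G] [BorelSpace G]
  [Semiring R] [SeminormedAddCommGroup E] [Module R E] [TopologicalSpace.SeparableSpace E]
  {V : G →* (E ≃ₗᵢ[R] E)}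

/-- Steinhaus' theorem: for `c` in a countable dense set the sets `{g | dist (V g⁻¹ ξ) c < ε / 2}`
cover `G`, so one of them has positive Haar measure, and its difference set is a neighbourhood
of `1`. -/
theorem setOf_dist_apply_lt_mem_nhds_one (hV : ∀ ξ η : E, Measurable fun g => dist (V g ξ) η)
    (ξ : E) {ε : ℝ} (hε : 0 < ε) : {g | dist (V g ξ) ξ < ε} ∈ 𝓝 (1 : G) := by
  obtain ⟨D, hDc, hDd⟩ := TopologicalSpace.exists_countable_dense E
  let U : E → Set G := fun c => {g | dist (V g⁻¹ ξ) c < ε / 2}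
  have hU : ∀ c, MeasurableSet (U c) := fun c =>
    ((hV ξ c).comp measurable_inv) measurableSet_Iio
  have hcover : (⋃ c ∈ D, U c) = univ := eq_univ_of_forall fun g =>
    let ⟨c, hcD, hc⟩ := hDd.exists_dist_lt (V g⁻¹ ξ) (half_pos hε)
    mem_biUnion hcD hc
  obtain ⟨c, -, hc⟩ : ∃ c ∈ D, 0 < Measure.haar (U c) := by
    by_contra! h
    have := (measure_biUnion_null_iff hDc).2 fun c hc => nonpos_iff_eq_zero.1 (h c hc)
    rw [hcover] at this
    exact (isOpen_univ.measure_pos Measure.haar univ_nonempty).ne' this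
  refine mem_of_superset (Measure.div_mem_nhds_one_of_haar_pos Measure.haar (U c) (hU c) hc) ?_
  rintro _ ⟨a, ha, b, hb, rfl⟩
  calc dist (V (a / b) ξ) ξ = dist (V b⁻¹ ξ) (V a⁻¹ ξ) := by
        rw [← (V a⁻¹).dist_map, ← Function.comp_apply (f := V a⁻¹), ← LinearIsometryEquiv.coe_mul,
          ← map_mul, div_eq_mul_inv, inv_mul_cancel_left]
    _ ≤ dist (V b⁻¹ ξ) c + dist (V a⁻¹ ξ) c := dist_triangle_right _ _ _
    _ < ε / 2 + ε / 2 := add_lt_add hb ha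
    _ = ε := add_halves ε

theorem continuous_apply_of_measurable_dist
    (hV : ∀ ξ η : E, Measurable fun g => dist (V g ξ) η) (ξ : E) :
    Continuous fun g => V g ξ := by
  have hone : Tendsto (fun g => V g ξ) (𝓝 1) (𝓝 ξ) :=
    Metric.tendsto_nhds.2 fun ε hε => setOf_dist_apply_lt_mem_nhds_one hV ξ hε
  refine continuous_iff_continuousAt.2 fun g₀ => ?_
  rw [ContinuousAt, ← map_mul_left_nhds_one, tendsto_map'_iff]
  simpa [Function.comp_def] using ((V g₀).continuous.tendsto ξ).comp hone

end AutomaticContinuity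

theorem MeasureTheory.StronglyMeasurable.measurable_eLpNorm_prod_right {α β E : Type*}
    [MeasurableSpace α] [MeasurableSpace β] [NormedAddCommGroup E] {μ : Measure β} [SFinite μ]
    {p : ℝ≥0∞} {F : α × β → E} (hF : StronglyMeasurable F) (hp : p ≠ ∞) :
    Measurable fun x => eLpNorm (fun y => F (x, y)) p μ := by
  rcases eq_or_ne p 0 with rfl | hp0
  · simp only [eLpNorm_exponent_zero, measurable_const]
  simp only [eLpNorm_eq_lintegral_rpow_enorm_toReal hp0 hp]
  exact ((hF.enorm.pow_const _).lintegral_prod_right').pow_const _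

section Koopman

variable {G Y 𝕜 E : Type*} [Group G] [MeasurableSpace G] [MeasurableSpace Y]
  {ν : Measure Y} {S : G → Y → Y}
  [NormedRing 𝕜] [NormedAddCommGroup E] [Module 𝕜 E] [IsBoundedSMul 𝕜 E] {p : ℝ≥0∞}

theorem IsBorelAction.image_eq_preimage_inv (hS : IsBorelAction S) (g : G) (B : Set Y) :
    S g '' B = S g⁻¹ ⁻¹' B := by
  refine congrFun (image_eq_preimage_of_inverse (fun y => ?_) (fun y => ?_)) B
  · rw [← hS.2.2, inv_mul_cancel, hS.2.1]
  · rw [← hS.2.2, mul_inv_cancel, hS.2.1]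

theorem IsMPAction.measurePreserving (hS : IsMPAction ν S) (g : G) :
    MeasurePreserving (S g) ν ν :=
  hS.2 g

theorem IsMPAction.compMeasurePreserving_one (hS : IsMPAction ν S) (ξ : Lp E p ν) :
    Lp.compMeasurePreserving (S 1) (hS.measurePreserving 1) ξ = ξ := by
  have h : id = S 1 := funext fun y => (hS.1.2.1 y).symm
  conv_rhs => rw [← Lp.compMeasurePreserving_id_apply ξ]
  simp only [h]

theorem IsMPAction.compMeasurePreserving_compMeasurePreserving (hS : IsMPAction ν S) (g h : G)
    (ξ : Lp E p ν) :
    Lp.compMeasurePreserving (S h) (hS.measurePreserving h)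
        (Lp.compMeasurePreserving (S g) (hS.measurePreserving g) ξ) =
      Lp.compMeasurePreserving (S (g * h)) (hS.measurePreserving (g * h)) ξ := by
  have hgh : S g ∘ S h = S (g * h) := funext fun y => (hS.1.2.2 g h y).symm
  rw [← Lp.compMeasurePreserving_comp_apply]
  simp only [hgh]

variable (𝕜 E p) in
def koopman [Fact (1 ≤ p)] (hS : IsMPAction ν S) : G →* (Lp E p ν ≃ₗᵢ[𝕜] Lp E p ν) where
  toFun g :=
    { toFun := Lp.compMeasurePreserving (S g⁻¹) (hS.measurePreserving g⁻¹)
      invFun := Lp.compMeasurePreserving (S g) (hS.measurePreserving g)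
      map_add' := map_add _
      map_smul' := (Lp.compMeasurePreservingₗ 𝕜 (S g⁻¹) (hS.measurePreserving g⁻¹)).map_smul
      left_inv := fun ξ => by
        rw [hS.compMeasurePreserving_compMeasurePreserving, inv_mul_cancel,
          hS.compMeasurePreserving_one]
      right_inv := fun ξ => by
        rw [hS.compMeasurePreserving_compMeasurePreserving, mul_inv_cancel,
          hS.compMeasurePreserving_one]
      norm_map' := (Lp.norm_compMeasurePreserving · (hS.measurePreserving g⁻¹)) }
  map_one' := by
    ext1 ξ
    change Lp.compMeasurePreserving (S 1⁻¹) (hS.measurePreserving 1⁻¹) ξ = ξ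
    rw [inv_one, hS.compMeasurePreserving_one]
  map_mul' g h := by
    ext1 ξ
    change Lp.compMeasurePreserving (S (g * h)⁻¹) (hS.measurePreserving _) ξ =
      Lp.compMeasurePreserving (S g⁻¹) (hS.measurePreserving g⁻¹)
        (Lp.compMeasurePreserving (S h⁻¹) (hS.measurePreserving h⁻¹) ξ)
    rw [hS.compMeasurePreserving_compMeasurePreserving, mul_inv_rev]

variable [Fact (1 ≤ p)]

theorem koopman_apply (hS : IsMPAction ν S) (g : G) (ξ : Lp E p ν) :
    koopman 𝕜 E p hS g ξ = Lp.compMeasurePreserving (S g⁻¹) (hS.measurePreserving g⁻¹) ξ :=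
  rfl

theorem measurable_dist_koopman [MeasurableInv G] [SFinite ν]
    (hS : IsMPAction ν S) (hp : p ≠ ∞) (ξ η : Lp E p ν) :
    Measurable fun g => dist (koopman 𝕜 E p hS g ξ) η := by
  have hF : StronglyMeasurable fun x : G × Y => ξ (S x.1 x.2) - η x.2 :=
    ((Lp.stronglyMeasurable ξ).comp_measurable hS.1.1).sub
      ((Lp.stronglyMeasurable η).comp_measurable measurable_snd)
  have hdist : ∀ g, dist (koopman 𝕜 E p hS g ξ) η =
      (eLpNorm (fun y => ξ (S g⁻¹ y) - η y) p ν).toReal := fun g => by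
    rw [Lp.dist_def, koopman_apply]
    congr 1
    refine eLpNorm_congr_ae ?_
    filter_upwards [Lp.coeFn_compMeasurePreserving ξ (hS.measurePreserving g⁻¹)] with y hy
    rw [Pi.sub_apply, hy]
    rfl
  simp only [hdist]
  exact ((hF.measurable_eLpNorm_prod_right hp).comp measurable_inv).ennreal_toReal

theorem continuous_koopman_apply [TopologicalSpace G] [IsTopologicalGroup G]
    [LocallyCompactSpace G] [SecondCountableTopology G] [BorelSpace G] [SFinite ν]
    [TopologicalSpace.SeparableSpace (Lp E p ν)] (hS : IsMPAction ν S) (hp : p ≠ ∞)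
    (ξ : Lp E p ν) : Continuous fun g => koopman 𝕜 E p hS g ξ :=
  continuous_apply_of_measurable_dist (measurable_dist_koopman hS hp) ξ

theorem dist_koopman_indicatorConstLp (hp0 : p ≠ 0) (hp : p ≠ ∞) (hS : IsMPAction ν S) (g : G)
    {A : Set Y} (hA : MeasurableSet A) (hνA : ν A ≠ ∞) (c : E) :
    dist (koopman 𝕜 E p hS g (indicatorConstLp p hA hνA c)) (indicatorConstLp p hA hνA c) =
      ‖c‖ * ν.real (symmDiff (S g '' A) A) ^ (1 / p.toReal) := by
  rw [koopman_apply, Lp.indicatorConstLp_compMeasurePreserving, dist_indicatorConstLp_eq_norm,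
    norm_indicatorConstLp hp0 hp, hS.1.image_eq_preimage_inv]

theorem measure_symmDiff_image_preimage_eq_zero_of_koopman_eq (hS : IsMPAction ν S) {g : G}
    {ζ : Lp E p ν} (hζ : koopman 𝕜 E p hS g ζ = ζ) (s : Set E) :
    ν (symmDiff (S g '' (ζ ⁻¹' s)) (ζ ⁻¹' s)) = 0 := by
  have hae : ζ ∘ S g⁻¹ =ᵐ[ν] ζ := by
    refine (Lp.coeFn_compMeasurePreserving ζ (hS.measurePreserving g⁻¹)).symm.trans ?_
    rw [← koopman_apply (𝕜 := 𝕜) hS, hζ]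
  rw [hS.1.image_eq_preimage_inv, ← preimage_comp, measure_symmDiff_eq_zero_iff]
  exact hae.preimage s

end Koopman

def HasAlmostInvariantVectors {G R E : Type*} [Group G] [TopologicalSpace G] [Semiring R]
    [SeminormedAddCommGroup E] [Module R E] (V : G →* (E ≃ₗᵢ[R] E)) : Prop :=
  ∀ ε : ℝ, 0 < ε → ∀ K : Set G, IsCompact K → ∃ ξ : E, ‖ξ‖ = 1 ∧ ∀ g ∈ K, ‖V g ξ - ξ‖ < ε

theorem IsFolner.hasAlmostInvariantVectors_koopman {G Y : Type*} [Group G] [TopologicalSpace G]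
    [MeasurableSpace G] [MeasurableSpace Y] {ν : Measure Y} {S : G → Y → Y} {A : ℕ → Set Y}
    (hA : IsFolner ν S A) (hS : IsMPAction ν S) :
    HasAlmostInvariantVectors (koopman ℂ ℂ 2 hS) := by
  intro ε hε K hK
  obtain ⟨n, hn⟩ :=
    ((hA.2 K hK).eventually_lt_const (ENNReal.ofReal_pos.2 (pow_pos hε 2))).exists
  obtain ⟨hAm, hA0, hAfin⟩ := hA.1 n
  have hm : 0 < ν.real (A n) := ENNReal.toReal_pos hA0.ne' hAfin
  refine ⟨indicatorConstLp 2 hAm hAfin (((√(ν.real (A n)))⁻¹ : ℝ) : ℂ), ?_, fun g hg => ?_⟩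
  · rw [norm_indicatorConstLp two_ne_zero ENNReal.ofNat_ne_top, ENNReal.toReal_ofNat,
      ← Real.sqrt_eq_rpow, Complex.norm_real, Real.norm_of_nonneg (by positivity)]
    exact inv_mul_cancel₀ (Real.sqrt_pos.2 hm).ne'
  · have hlt : ν.real (symmDiff (S g '' A n) (A n)) / ν.real (A n) < ε ^ 2 := by
      rw [measureReal_def, measureReal_def, ← ENNReal.toReal_div]
      exact ENNReal.toReal_lt_of_lt_ofReal ((le_iSup₂_of_le g hg le_rfl).trans_lt hn)
    rw [← dist_eq_norm, dist_koopman_indicatorConstLp two_ne_zero ENNReal.ofNat_ne_top,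
      ENNReal.toReal_ofNat, ← Real.sqrt_eq_rpow, Complex.norm_real,
      Real.norm_of_nonneg (by positivity), inv_mul_eq_div, ← Real.sqrt_div' _ hm.le]
    exact (Real.sqrt_lt' hε).2 hlt

/-- `HasPropertyTPair` only tests representations on spaces in `Type`, while `L²(ν)` lives in the
universe of the underlying space. -/
theorem HasPropertyTPair.exists_fixed_of_linearIsometryEquiv {G : Type*} [Group G]
    [TopologicalSpace G] {H : Subgroup G} (hT : HasPropertyTPair G H)
    {E₀ : Type} [NormedAddCommGroup E₀] [InnerProductSpace ℂ E₀] [CompleteSpace E₀]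
    [SecondCountableTopology E₀] {E : Type*} [SeminormedAddCommGroup E] [Module ℂ E]
    (Φ : E₀ ≃ₗᵢ[ℂ] E) (V : G →* (E ≃ₗᵢ[ℂ] E)) (hV : ∀ ξ, Continuous fun g => V g ξ)
    (hV' : HasAlmostInvariantVectors V) : ∃ η : E, η ≠ 0 ∧ ∀ h ∈ H, V h η = η := by
  let V₀ : G →* (E₀ ≃ₗᵢ[ℂ] E₀) :=
    { toFun := fun g => (Φ.trans (V g)).trans Φ.symm
      map_one' := by ext; simp
      map_mul' := fun g h => by ext; simp }
  have hV₀ : ∀ g ξ, V₀ g ξ = Φ.symm (V g (Φ ξ)) := fun _ _ => rfl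
  obtain ⟨η, hη0, hηH⟩ := hT E₀ V₀
    (fun ξ ζ => (Φ.symm.continuous.comp (hV (Φ ξ))).inner continuous_const)
    (fun ε hε K hK => by
      obtain ⟨ξ, hξ1, hξK⟩ := hV' ε hε K hK
      refine ⟨Φ.symm ξ, by rwa [Φ.symm.norm_map], fun g hg => ?_⟩
      rw [hV₀, Φ.apply_symm_apply, ← map_sub, Φ.symm.norm_map]
      exact hξK g hg)
  exact ⟨Φ η, by simpa using hη0, fun h hh => Φ.symm_apply_eq.1 ((hV₀ h η).symm.trans (hηH h hh))⟩

theorem MeasurableEmbedding.compMeasurePreserving_surjective {α β E : Type*}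
    [MeasurableSpace α] [MeasurableSpace β] [NormedAddCommGroup E] {p : ℝ≥0∞} {μ : Measure α}
    {f : α → β} (hf : MeasurableEmbedding f) :
    Function.Surjective
      (Lp.compMeasurePreserving (E := E) (p := p) f (hf.measurable.measurePreserving μ)) := by
  intro ξ
  obtain ⟨u, hu, hξ⟩ :=
    hf.exists_stronglyMeasurable_extend (Lp.stronglyMeasurable ξ) fun _ => ⟨0⟩
  have hu_mem : MemLp u p (μ.map f) := hf.memLp_map_measure_iff.2 (hξ ▸ Lp.memLp ξ)
  refine ⟨hu_mem.toLp u, ?_⟩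
  rw [Lp.toLp_compMeasurePreserving]
  simp only [hξ, Lp.toLp_coeFn]

def MeasurableEmbedding.lpMapEquiv {α β 𝕜 E : Type*} [MeasurableSpace α]
    [MeasurableSpace β] [NormedRing 𝕜] [NormedAddCommGroup E] [Module 𝕜 E] [IsBoundedSMul 𝕜 E]
    {p : ℝ≥0∞} [Fact (1 ≤ p)] (μ : Measure α) {f : α → β} (hf : MeasurableEmbedding f) :
    Lp E p (μ.map f) ≃ₗᵢ[𝕜] Lp E p μ :=
  LinearIsometryEquiv.ofSurjective
    (Lp.compMeasurePreservingₗᵢ 𝕜 f (hf.measurable.measurePreserving μ))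
    hf.compMeasurePreserving_surjective

theorem MeasureTheory.Lp.exists_measure_setOf_le_nnnorm_pos {Y E : Type*} [MeasurableSpace Y]
    [NormedAddCommGroup E] {ν : Measure Y} {p : ℝ≥0∞} {ζ : Lp E p ν} (hζ : ζ ≠ 0) :
    ∃ t : ℝ≥0, t ≠ 0 ∧ 0 < ν {y | t ≤ ‖ζ y‖₊} := by
  by_contra! h
  refine hζ (Lp.eq_zero_iff_ae_eq_zero.2 (measure_mono_null (fun y hy => ?_)
    (measure_iUnion_null fun n : ℕ => nonpos_iff_eq_zero.1 (h (n + 1)⁻¹ (by positivity)))))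
  obtain ⟨n, hn⟩ := exists_nat_one_div_lt (nnnorm_pos.2 hy)
  exact mem_iUnion.2 ⟨n, by simpa using hn.le⟩

theorem propertyT_pair_no_folner_general {G : Type*} [Group G] [TopologicalSpace G]
    [IsTopologicalGroup G] [LocallyCompactSpace G] [SecondCountableTopology G]
    [MeasurableSpace G] [BorelSpace G]
    (H : Subgroup G) (hTpair : HasPropertyTPair G H)
    (Y : Type*) [MeasurableSpace Y] [StandardBorelSpace Y]
    (ν : Measure Y) [SigmaFinite ν]
    (S : G → Y → Y) (hS : IsMPAction ν S)
    (hnoinv : ¬ ∃ B : Set Y, MeasurableSet B ∧ 0 < ν B ∧ ν B ≠ ∞ ∧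
      ∀ h ∈ H, ν (symmDiff (S h '' B) B) = 0) :
    ¬ ∃ A : ℕ → Set Y, IsFolner ν S A := by
  rintro ⟨A, hA⟩
  -- makes `Lp ℂ 2 _` separable by instance search
  have : Fact ((2 : ℝ≥0∞) ≠ ∞) := ⟨ENNReal.ofNat_ne_top⟩
  obtain ⟨f, hf⟩ := exists_measurableEmbedding_real Y
  obtain ⟨ζ, hζ0, hζH⟩ := hTpair.exists_fixed_of_linearIsometryEquiv (hf.lpMapEquiv ν)
    (koopman ℂ ℂ 2 hS) (continuous_koopman_apply hS ENNReal.ofNat_ne_top)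
    (hA.hasAlmostInvariantVectors_koopman hS)
  obtain ⟨t, ht0, hpos⟩ := Lp.exists_measure_setOf_le_nnnorm_pos hζ0
  exact hnoinv ⟨ζ ⁻¹' {x | t ≤ ‖x‖₊},
    (Lp.stronglyMeasurable ζ).measurable (measurable_nnnorm measurableSet_Ici), hpos,
    ((Lp.memLp ζ).meas_ge_lt_top two_ne_zero ENNReal.ofNat_ne_top ht0).ne,
    fun h hh => measure_symmDiff_image_preimage_eq_zero_of_koopman_eq hS (hζH h hh) _⟩

/-- **Theorem D(i).** If the pair `H ⊆ G` (with `H` a noncompact closed subgroup) has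
property (T), then every measure-preserving Borel `G`-action `S` on a σ-finite infinite
standard measure space whose restriction to `H` has no invariant set of positive finite
measure admits no `S`-Følner sequence. -/
theorem propertyT_pair_no_folner {G : Type*} [Group G] [TopologicalSpace G]
    [IsTopologicalGroup G] [LocallyCompactSpace G] [SecondCountableTopology G]
    [NoncompactSpace G] [MeasurableSpace G] [BorelSpace G]
    (H : Subgroup G) (hHclosed : IsClosed (H : Set G)) (hHnoncompact : ¬ IsCompact (H : Set G))
    (hTpair : HasPropertyTPair G H)
    (Y : Type*) [MeasurableSpace Y] [StandardBorelSpace Y]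
    (ν : Measure Y) [SigmaFinite ν] (hinf : ν Set.univ = ∞)
    (S : G → Y → Y) (hS : IsMPAction ν S)
    (hnoinv : ¬ ∃ B : Set Y, MeasurableSet B ∧ 0 < ν B ∧ ν B ≠ ∞ ∧
      ∀ h ∈ H, ν (symmDiff (S h '' B) B) = 0) :
    ¬ ∃ A : ℕ → Set Y, IsFolner ν S A :=
  propertyT_pair_no_folner_general H hTpair Y ν S hS hnoinv
end
end

section
/- Let (Y, γ) be a standard nonatomic probability space, 𝐁 = (B_n)_{n≥1} a sequence of measurable subsets of Y with γ(B_n) > 0, and T a γ-preserving Borel bijection of Y such that ∑_{n=1}^∞ γ(B_n △ T B_n)/γ(B_n) < ∞. Let μ be a measure on X = Y^ℕ whose restriction to each 𝐁^n equals ⊗_{j=1}^n (γ/γ(B_j)) ⊗ ⊗_{j>n} (γ|_{B_j}/γ(B_j)). Then the coordinatewise product map 𝐓 = T × T × ⋯ on X preserves μ, i.e. μ ∘ 𝐓^{-1} = μ. -/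
open MeasureTheory Filter Topology Set ENNReal

noncomputable section

/-!
Since `γ (T⁻¹ S) = γ S`, pulling back along `𝐓` turns a cylinder formula for `μ` relative to
`(T⁻¹ B n)` into one for `μ ∘ 𝐓⁻¹` relative to `(B n)`. Such a formula for `μ` comes from the
summability hypothesis, through `γ (B n \ T⁻¹ B n) ≤ γ (B n ∆ T B n)` and a Borel–Cantelli
estimate inside each tail cylinder: `μ`-a.e. sequence eventually lies in `T⁻¹ B n`, and the
cylinders agreeing eventually with `T⁻¹ B n` get the same masses as those agreeing with `B n`.
So `μ ∘ 𝐓⁻¹` and `μ` satisfy the same cylinder formula and are carried by the same tail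
cylinders, on each of which both are finite; the π-λ theorem identifies them.
-/

section TailCylinder

variable {Y : Type*}

theorem tailCylinder_eq_univ_pi (B : ℕ → Set Y) (n : ℕ) :
    tailCylinder B n = univ.pi fun j => if n ≤ j then B j else univ := by
  ext x
  simp only [tailCylinder, mem_ofPred_eq, mem_univ_pi]
  exact forall_congr' fun j => by split_ifs <;> simp [*]

theorem tailCylinder_mono (B : ℕ → Set Y) : Monotone (tailCylinder B) :=
  fun _ _ hmn _ hx j hj => hx j (hmn.trans hj)

theorem pi_inter_tailCylinder (I : Finset ℕ) (t : ℕ → Set Y) (B : ℕ → Set Y) (n : ℕ) :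
    (I : Set ℕ).pi t ∩ tailCylinder B n =
      univ.pi fun j => (if j ∈ I then t j else univ) ∩ (if n ≤ j then B j else univ) := by
  classical
  rw [pi_inter_distrib, ← univ_pi_ite, tailCylinder_eq_univ_pi]
  simp only [Finset.mem_coe]

variable [MeasurableSpace Y]

theorem measurableSet_tailCylinder {B : ℕ → Set Y} (hB : ∀ n, MeasurableSet (B n)) (n : ℕ) :
    MeasurableSet (tailCylinder B n) := by
  rw [tailCylinder_eq_univ_pi]
  exact .univ_pi fun j => by split_ifs <;> simp [hB j]

theorem tendsto_measure_inter_tailCylinder {μ : Measure (ℕ → Y)} {B : ℕ → Set Y}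
    (hμ : μ (⋃ n, tailCylinder B n)ᶜ = 0) (s : Set (ℕ → Y)) :
    Tendsto (fun n => μ (s ∩ tailCylinder B n)) atTop (𝓝 (μ s)) := by
  have := tendsto_measure_iUnion_atTop (μ := μ)
    fun _ _ hmn => inter_subset_inter_right s (tailCylinder_mono B hmn)
  rwa [← inter_iUnion, measure_inter_conull hμ] at this

end TailCylinder

theorem ENNReal.tendsto_const_mul_tsum_nat_add {δ : ℕ → ℝ≥0∞} (hδ : ∑' j, δ j ≠ ∞) {P : ℝ≥0∞}
    (hP : P ≠ ∞) :
    Tendsto (fun n => P * ∑' k, δ (k + n)) atTop (𝓝 0) := by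
  simpa using ENNReal.Tendsto.const_mul (ENNReal.tendsto_sum_nat_add δ hδ) (Or.inr hP)

theorem MeasureTheory.MeasurePreserving.measure_diff_preimage_le_symmDiff_image {Y : Type*}
    [MeasurableSpace Y] {γ : Measure Y} {T : Y ≃ᵐ Y} (hT : MeasurePreserving T γ γ) (s : Set Y) :
    γ (s \ T ⁻¹' s) ≤ γ (symmDiff s (T '' s)) :=
  calc γ (s \ T ⁻¹' s) = γ (T ⁻¹' (T '' s \ s)) := by rw [preimage_sdiff, T.preimage_image]
    _ = γ (T '' s \ s) := hT.measure_preimage_equiv _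
    _ ≤ γ (symmDiff s (T '' s)) :=
      measure_mono (by rw [Set.symmDiff_def]; exact subset_union_right)

section Uniqueness

variable {Y : Type*} [MeasurableSpace Y]

theorem restrict_tailCylinder_eq_of_measure_univ_pi {μ ν : Measure (ℕ → Y)} {B : ℕ → Set Y}
    (hB : ∀ j, MeasurableSet (B j)) {n : ℕ} (hfin : μ (tailCylinder B n) ≠ ∞)
    (heq : ∀ (m : ℕ) (C : ℕ → Set Y), (∀ j, MeasurableSet (C j)) →
      (∀ j, m ≤ j → C j = B j) → μ (univ.pi C) = ν (univ.pi C)) :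
    μ.restrict (tailCylinder B n) = ν.restrict (tailCylinder B n) := by
  have := isFiniteMeasure_restrict.2 hfin
  refine ext_of_generate_finite _ generateFrom_squareCylinders.symm
    (isPiSystem_squareCylinders (fun _ => MeasurableSpace.isPiSystem_measurableSet)
      fun _ => .univ) ?_ ?_
  · rintro _ ⟨I, t, ht, rfl⟩
    rw [Measure.restrict_apply' (measurableSet_tailCylinder hB n),
      Measure.restrict_apply' (measurableSet_tailCylinder hB n), pi_inter_tailCylinder]
    refine heq (n + I.sup id + 1) _ (fun j => ?_) fun j hj => ?_
    · refine MeasurableSet.inter ?_ ?_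
      · split_ifs
        exacts [ht j trivial, .univ]
      · split_ifs
        exacts [hB j, .univ]
    · have hjI : j ∉ I := fun h => by
        have := Finset.le_sup (f := id) h
        simp only [id] at this
        omega
      simp [hjI, show n ≤ j by omega]
  · rw [Measure.restrict_apply_univ, Measure.restrict_apply_univ, tailCylinder_eq_univ_pi]
    refine heq n _ (fun j => ?_) fun j hj => if_pos hj
    split_ifs
    exacts [hB j, .univ]

theorem ext_of_measure_univ_pi {μ ν : Measure (ℕ → Y)} {B : ℕ → Set Y}
    (hB : ∀ j, MeasurableSet (B j)) (hμ : μ (⋃ n, tailCylinder B n)ᶜ = 0)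
    (hν : ν (⋃ n, tailCylinder B n)ᶜ = 0) (hfin : ∀ n, μ (tailCylinder B n) ≠ ∞)
    (heq : ∀ (m : ℕ) (C : ℕ → Set Y), (∀ j, MeasurableSet (C j)) →
      (∀ j, m ≤ j → C j = B j) → μ (univ.pi C) = ν (univ.pi C)) :
    μ = ν := by
  ext s hs
  refine tendsto_nhds_unique (tendsto_measure_inter_tailCylinder hμ s) ?_
  simpa only [← Measure.restrict_apply hs,
    restrict_tailCylinder_eq_of_measure_univ_pi hB (hfin _) heq]
    using tendsto_measure_inter_tailCylinder hν s

end Uniqueness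

section RestrictedPower

variable {Y : Type*} [MeasurableSpace Y]

/-- `μ` is the restricted infinite power `γ^𝐁`, described by its values on the cylinders that
agree with `B` from some index on and by living on the tail cylinders (indices start at `0`). -/
structure IsRestrictedPower (γ : Measure Y) (B : ℕ → Set Y) (μ : Measure (ℕ → Y)) : Prop where
  measure_univ_pi (m : ℕ) (C : ℕ → Set Y) : (∀ j, MeasurableSet (C j)) →
    (∀ j, m ≤ j → C j = B j) → μ (univ.pi C) = ∏ j ∈ Finset.range m, γ (C j) / γ (B j)
  measure_compl_iUnion_tailCylinder : μ (⋃ n, tailCylinder B n)ᶜ = 0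

theorem prod_range_div_eq_of_le {γ : Measure Y} [IsFiniteMeasure γ] {B C : ℕ → Set Y}
    (hB0 : ∀ j, γ (B j) ≠ 0) {m n : ℕ} (hmn : m ≤ n) (hCB : ∀ j, m ≤ j → γ (C j) = γ (B j)) :
    ∏ j ∈ Finset.range n, γ (C j) / γ (B j) = ∏ j ∈ Finset.range m, γ (C j) / γ (B j) :=
  (Finset.prod_subset (Finset.range_subset_range.2 hmn) fun j _ hj => by
    rw [hCB j (not_lt.1 (Finset.mem_range.not.1 hj)),
      ENNReal.div_self (hB0 j) (measure_ne_top γ _)]).symm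

namespace IsRestrictedPower

variable {γ : Measure Y} {B : ℕ → Set Y} {μ : Measure (ℕ → Y)}

theorem map {T : Y → Y} (hT : MeasurePreserving T γ γ) (hB : ∀ j, MeasurableSet (B j))
    (hμ : IsRestrictedPower γ (fun j => T ⁻¹' B j) μ) :
    IsRestrictedPower γ B (μ.map fun x n => T (x n)) := by
  have hTmeas : Measurable fun (x : ℕ → Y) n => T (x n) :=
    measurable_pi_lambda _ fun n => hT.measurable.comp (measurable_pi_apply n)
  constructor
  · intro m C hC hCB
    rw [Measure.map_apply hTmeas (.univ_pi hC)]
    refine (hμ.measure_univ_pi m (fun j => T ⁻¹' C j) (fun j => hT.measurable (hC j))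
      fun j hj => by rw [hCB j hj]).trans ?_
    simp only [hT.measure_preimage (hC _).nullMeasurableSet,
      hT.measure_preimage (hB _).nullMeasurableSet]
  · rw [Measure.map_apply hTmeas (MeasurableSet.iUnion (measurableSet_tailCylinder hB)).compl,
      preimage_compl, preimage_iUnion]
    exact hμ.measure_compl_iUnion_tailCylinder

variable [IsFiniteMeasure γ]

theorem measure_univ_pi_ne_top (hμ : IsRestrictedPower γ B μ) (hB0 : ∀ j, γ (B j) ≠ 0)
    {m : ℕ} {C : ℕ → Set Y} (hC : ∀ j, MeasurableSet (C j)) (hCB : ∀ j, m ≤ j → C j = B j) :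
    μ (univ.pi C) ≠ ∞ := by
  rw [hμ.measure_univ_pi m C hC hCB]
  exact ENNReal.prod_ne_top fun j _ => ENNReal.div_ne_top (measure_ne_top γ _) (hB0 j)

theorem measure_tailCylinder_ne_top (hμ : IsRestrictedPower γ B μ)
    (hB : ∀ j, MeasurableSet (B j)) (hB0 : ∀ j, γ (B j) ≠ 0) (n : ℕ) :
    μ (tailCylinder B n) ≠ ∞ := by
  rw [tailCylinder_eq_univ_pi]
  refine hμ.measure_univ_pi_ne_top hB0 (fun j => ?_) fun j hj => if_pos hj
  split_ifs
  exacts [hB j, .univ]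

theorem measure_univ_pi_ite_lt (hμ : IsRestrictedPower γ B μ) (hB : ∀ j, MeasurableSet (B j))
    (hB0 : ∀ j, γ (B j) ≠ 0) {m N : ℕ} (hmN : m ≤ N) {D : ℕ → Set Y}
    (hD : ∀ j, MeasurableSet (D j)) (hDB : ∀ j, m ≤ j → γ (D j) = γ (B j)) :
    μ (univ.pi fun j => if j < N then D j else B j) =
      ∏ j ∈ Finset.range m, γ (D j) / γ (B j) := by
  rw [hμ.measure_univ_pi N _ (fun j => by split_ifs; exacts [hD j, hB j])
      fun j hj => if_neg (not_lt.2 hj),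
    Finset.prod_congr rfl fun j hj => by rw [if_pos (Finset.mem_range.1 hj)]]
  exact prod_range_div_eq_of_le hB0 hmN hDB

theorem measure_univ_pi_le (hμ : IsRestrictedPower γ B μ) (hB : ∀ j, MeasurableSet (B j))
    (hB0 : ∀ j, γ (B j) ≠ 0) {m : ℕ} {D : ℕ → Set Y} (hD : ∀ j, MeasurableSet (D j))
    (hDB : ∀ j, m ≤ j → γ (D j) = γ (B j)) :
    μ (univ.pi D) ≤ ∏ j ∈ Finset.range m, γ (D j) / γ (B j) := by
  refine le_of_tendsto
    (tendsto_measure_inter_tailCylinder hμ.measure_compl_iUnion_tailCylinder (univ.pi D))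
    ((eventually_ge_atTop m).mono fun N hN => ?_)
  rw [← hμ.measure_univ_pi_ite_lt hB hB0 hN hD hDB]
  refine measure_mono fun x ⟨hxD, hxB⟩ j _ => ?_
  by_cases hj : j < N
  · simpa [hj] using hxD j trivial
  · simpa [hj] using hxB j (not_lt.1 hj)

theorem measure_univ_pi_update (hμ : IsRestrictedPower γ B μ) (hB0 : ∀ j, γ (B j) ≠ 0)
    {m i : ℕ} (hmi : m ≤ i) {C : ℕ → Set Y} (hC : ∀ j, MeasurableSet (C j))
    (hCB : ∀ j, m ≤ j → C j = B j) {S : Set Y} (hS : MeasurableSet S) :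
    μ (univ.pi (Function.update C i S)) = μ (univ.pi C) * (γ S / γ (B i)) := by
  have hCS : ∀ j, MeasurableSet (Function.update C i S j) := fun j => by
    rcases eq_or_ne j i with rfl | hji
    · rwa [Function.update_self]
    · rw [Function.update_of_ne hji]; exact hC j
  rw [hμ.measure_univ_pi (i + 1) _ hCS fun j hj => by
      rw [Function.update_of_ne (by omega), hCB j (by omega)],
    Finset.prod_range_succ, Function.update_self,
    Finset.prod_congr rfl fun j hj => by
      rw [Function.update_of_ne (Finset.mem_range.1 hj).ne],
    prod_range_div_eq_of_le hB0 hmi fun j hj => by rw [hCB j hj],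
    hμ.measure_univ_pi m C hC hCB]

theorem measure_univ_pi_diff_tailCylinder_le (hμ : IsRestrictedPower γ B μ)
    (hB : ∀ j, MeasurableSet (B j)) (hB0 : ∀ j, γ (B j) ≠ 0) {B' : ℕ → Set Y}
    (hB' : ∀ j, MeasurableSet (B' j)) {m n : ℕ} (hmn : m ≤ n) {C : ℕ → Set Y}
    (hC : ∀ j, MeasurableSet (C j)) (hCB : ∀ j, m ≤ j → C j = B j) :
    μ (univ.pi C \ tailCylinder B' n) ≤
      μ (univ.pi C) * ∑' k, γ (B (k + n) \ B' (k + n)) / γ (B (k + n)) := by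
  have hsub : univ.pi C \ tailCylinder B' n ⊆
      ⋃ k, univ.pi (Function.update C (k + n) (B (k + n) \ B' (k + n))) := by
    rintro x ⟨hxC, hxB'⟩
    obtain ⟨j, hnj, hj⟩ : ∃ j, n ≤ j ∧ x j ∉ B' j := by simpa [tailCylinder] using hxB'
    refine mem_iUnion.2 ⟨j - n, fun i _ => ?_⟩
    rw [Nat.sub_add_cancel hnj]
    rcases eq_or_ne i j with rfl | hij
    · rw [Function.update_self, ← hCB i (hmn.trans hnj)]
      exact ⟨hxC i trivial, hj⟩
    · rw [Function.update_of_ne hij]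
      exact hxC i trivial
  calc μ (univ.pi C \ tailCylinder B' n)
      ≤ ∑' k, μ (univ.pi (Function.update C (k + n) (B (k + n) \ B' (k + n)))) :=
        (measure_mono hsub).trans (measure_iUnion_le _)
    _ = ∑' k, μ (univ.pi C) * (γ (B (k + n) \ B' (k + n)) / γ (B (k + n))) :=
        tsum_congr fun k => hμ.measure_univ_pi_update hB0 (by omega) hC hCB
          ((hB _).diff (hB' _))
    _ = _ := ENNReal.tsum_mul_left

theorem measure_compl_iUnion_tailCylinder_of_tsum_ne_top (hμ : IsRestrictedPower γ B μ)
    (hB : ∀ j, MeasurableSet (B j)) (hB0 : ∀ j, γ (B j) ≠ 0) {B' : ℕ → Set Y}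
    (hB' : ∀ j, MeasurableSet (B' j)) (hsum : ∑' j, γ (B j \ B' j) / γ (B j) ≠ ∞) :
    μ (⋃ n, tailCylinder B' n)ᶜ = 0 := by
  have hnull : ∀ n, μ (tailCylinder B n \ ⋃ n, tailCylinder B' n) = 0 := by
    intro n
    refine le_zero_iff.1 <| ge_of_tendsto
      (tendsto_const_mul_tsum_nat_add hsum (hμ.measure_tailCylinder_ne_top hB hB0 n))
      ((eventually_ge_atTop n).mono fun N hN => ?_)
    calc μ (tailCylinder B n \ ⋃ n, tailCylinder B' n)
        ≤ μ (tailCylinder B n \ tailCylinder B' N) :=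
          measure_mono (sdiff_subset_sdiff_right (subset_iUnion _ N))
      _ ≤ _ := by
        rw [tailCylinder_eq_univ_pi]
        exact hμ.measure_univ_pi_diff_tailCylinder_le hB hB0 hB' hN
          (fun j => by split_ifs; exacts [hB j, .univ]) fun j hj => if_pos hj
  have hcover : (⋃ n, tailCylinder B' n)ᶜ ⊆
      (⋃ n, tailCylinder B n)ᶜ ∪ ⋃ n, (tailCylinder B n \ ⋃ n, tailCylinder B' n) := by
    intro x hx
    by_cases hxB : x ∈ ⋃ n, tailCylinder B n
    · obtain ⟨n, hn⟩ := mem_iUnion.1 hxB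
      exact Or.inr (mem_iUnion.2 ⟨n, hn, hx⟩)
    · exact Or.inl hxB
  exact measure_mono_null hcover
    (measure_union_null hμ.measure_compl_iUnion_tailCylinder (measure_iUnion_null hnull))

theorem measure_univ_pi_of_tsum_ne_top (hμ : IsRestrictedPower γ B μ)
    (hB : ∀ j, MeasurableSet (B j)) (hB0 : ∀ j, γ (B j) ≠ 0) {B' : ℕ → Set Y}
    (hB' : ∀ j, MeasurableSet (B' j)) (hγB' : ∀ j, γ (B' j) = γ (B j))
    (hsum : ∑' j, γ (B j \ B' j) / γ (B j) ≠ ∞) {m : ℕ} {D : ℕ → Set Y}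
    (hD : ∀ j, MeasurableSet (D j)) (hDB' : ∀ j, m ≤ j → D j = B' j) :
    μ (univ.pi D) = ∏ j ∈ Finset.range m, γ (D j) / γ (B j) := by
  set P := ∏ j ∈ Finset.range m, γ (D j) / γ (B j)
  let C : ℕ → ℕ → Set Y := fun N j => if j < N then D j else B j
  have hC : ∀ N j, MeasurableSet (C N j) := fun N j => by
    by_cases h : j < N <;> simp [C, h, hD j, hB j]
  have hCB : ∀ N j, N ≤ j → C N j = B j := fun N j hj => if_neg (not_lt.2 hj)
  have hμC : ∀ N, m ≤ N → μ (univ.pi (C N)) = P := fun N hN =>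
    hμ.measure_univ_pi_ite_lt hB hB0 hN hD fun j hj => by rw [hDB' j hj, hγB']
  refine le_antisymm (hμ.measure_univ_pi_le hB hB0 hD fun j hj => by rw [hDB' j hj, hγB']) ?_
  have hP : P ≠ ∞ := hμC m le_rfl ▸ hμ.measure_univ_pi_ne_top hB0 (hC m) (hCB m)
  have hlim := (tendsto_measure_inter_tailCylinder hμ.measure_compl_iUnion_tailCylinder
    (univ.pi D)).add (tendsto_const_mul_tsum_nat_add hsum hP)
  rw [add_zero] at hlim
  refine ge_of_tendsto hlim ((eventually_ge_atTop m).mono fun N hN => ?_)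
  have hcover : univ.pi (C N) ⊆
      (univ.pi D ∩ tailCylinder B N) ∪ (univ.pi (C N) \ tailCylinder B' N) := by
    intro x hx
    by_cases hxB' : x ∈ tailCylinder B' N
    · refine Or.inl ⟨fun j _ => ?_, fun j hj => ?_⟩
      · by_cases hj : j < N
        · simpa [C, hj] using hx j trivial
        · rw [hDB' j (hN.trans (not_lt.1 hj))]
          exact hxB' j (not_lt.1 hj)
      · simpa [C, not_lt.2 hj] using hx j trivial
    · exact Or.inr ⟨hx, hxB'⟩
  calc P = μ (univ.pi (C N)) := (hμC N hN).symm
    _ ≤ μ (univ.pi D ∩ tailCylinder B N) + μ (univ.pi (C N) \ tailCylinder B' N) :=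
      (measure_mono hcover).trans (measure_union_le _ _)
    _ ≤ _ := add_le_add_right ((hμ.measure_univ_pi_diff_tailCylinder_le hB hB0 hB' le_rfl
        (hC N) (hCB N)).trans_eq (by rw [hμC N hN])) _

theorem of_tsum_ne_top (hμ : IsRestrictedPower γ B μ) (hB : ∀ j, MeasurableSet (B j))
    (hB0 : ∀ j, γ (B j) ≠ 0) {B' : ℕ → Set Y} (hB' : ∀ j, MeasurableSet (B' j))
    (hγB' : ∀ j, γ (B' j) = γ (B j)) (hsum : ∑' j, γ (B j \ B' j) / γ (B j) ≠ ∞) :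
    IsRestrictedPower γ B' μ where
  measure_univ_pi m D hD hDB' := by
    simp only [hγB']
    exact hμ.measure_univ_pi_of_tsum_ne_top hB hB0 hB' hγB' hsum hD hDB'
  measure_compl_iUnion_tailCylinder :=
    hμ.measure_compl_iUnion_tailCylinder_of_tsum_ne_top hB hB0 hB' hsum

theorem unique {ν : Measure (ℕ → Y)} (hμ : IsRestrictedPower γ B μ)
    (hν : IsRestrictedPower γ B ν) (hB : ∀ j, MeasurableSet (B j)) (hB0 : ∀ j, γ (B j) ≠ 0) :
    μ = ν :=
  ext_of_measure_univ_pi hB hμ.measure_compl_iUnion_tailCylinder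
    hν.measure_compl_iUnion_tailCylinder (hμ.measure_tailCylinder_ne_top hB hB0)
    fun m C hC hCB => by rw [hμ.measure_univ_pi m C hC hCB, hν.measure_univ_pi m C hC hCB]

end IsRestrictedPower

end RestrictedPower

theorem prod_map_measurePreserving_restrictedPower_general {Y : Type*} [MeasurableSpace Y]
    (γ : Measure Y) [IsProbabilityMeasure γ]
    (B : ℕ → Set Y) (hBm : ∀ n, MeasurableSet (B n)) (hBpos : ∀ n, 0 < γ (B n))
    (T : Y ≃ᵐ Y) (hT : MeasurePreserving T γ γ)
    (hsum : (∑' n, γ (symmDiff (B n) (⇑T '' B n)) / γ (B n)) ≠ ∞)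
    (μ : Measure (ℕ → Y))
    (hcyl : ∀ (m : ℕ) (C : ℕ → Set Y), (∀ j, MeasurableSet (C j)) →
      (∀ j, m ≤ j → C j = B j) →
      μ {x : ℕ → Y | ∀ j, x j ∈ C j} = ∏ j ∈ Finset.range m, γ (C j) / γ (B j))
    (hsupp : μ ((⋃ n, tailCylinder B n)ᶜ) = 0) :
    MeasurePreserving (fun (x : ℕ → Y) (n : ℕ) => T (x n)) μ μ := by
  have hB0 : ∀ n, γ (B n) ≠ 0 := fun n => (hBpos n).ne'
  have hμ : IsRestrictedPower γ B μ :=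
    ⟨fun m C hC hCB => (congrArg μ (Set.ext fun _ => mem_univ_pi)).trans (hcyl m C hC hCB),
      hsupp⟩
  have hμT : IsRestrictedPower γ (fun n => T ⁻¹' B n) μ :=
    hμ.of_tsum_ne_top hBm hB0 (fun n => T.measurable (hBm n))
      (fun n => hT.measure_preimage_equiv _) <| ne_top_of_le_ne_top hsum <|
        ENNReal.tsum_le_tsum fun n =>
          ENNReal.div_le_div_right (hT.measure_diff_preimage_le_symmDiff_image _) _
  exact ⟨by fun_prop, (hμT.map hT hBm).unique hμ hBm hB0⟩

/-- **Proposition 1.6.** If `T` is a `γ`-preserving Borel bijection of a standard nonatomic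
probability space and `∑ γ (B n ∆ T (B n)) / γ (B n) < ∞`, then the coordinatewise product
map `𝐓 = T × T × ⋯` preserves the restricted infinite power `μ = γ^𝐁`. -/
theorem prod_map_measurePreserving_restrictedPower {Y : Type*} [MeasurableSpace Y]
    [StandardBorelSpace Y]
    (γ : Measure Y) [IsProbabilityMeasure γ] (hna : ∀ y : Y, γ {y} = 0)
    (B : ℕ → Set Y) (hBm : ∀ n, MeasurableSet (B n)) (hBpos : ∀ n, 0 < γ (B n))
    (T : Y ≃ᵐ Y) (hT : MeasurePreserving T γ γ)
    (hsum : (∑' n, γ (symmDiff (B n) (⇑T '' B n)) / γ (B n)) ≠ ∞)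
    (μ : Measure (ℕ → Y))
    (hcyl : ∀ (m : ℕ) (C : ℕ → Set Y), (∀ j, MeasurableSet (C j)) →
      (∀ j, m ≤ j → C j = B j) →
      μ {x : ℕ → Y | ∀ j, x j ∈ C j} = ∏ j ∈ Finset.range m, γ (C j) / γ (B j))
    (hsupp : μ ((⋃ n, tailCylinder B n)ᶜ) = 0) :
    MeasurePreserving (fun (x : ℕ → Y) (n : ℕ) => T (x n)) μ μ :=
  prod_map_measurePreserving_restrictedPower_general γ B hBm hBpos T hT hsum μ hcyl hsupp
end
end

section
/- Let (Y, γ) be a standard nonatomic probability space, 𝐁 = (B_n)_{n≥1} a sequence of measurable subsets with γ(B_n) > 0, and T a γ-preserving Borel bijection of Y such that ∑_{n=1}^∞ γ(B_n △ T B_n)/γ(B_n) < ∞. Let μ = γ^𝐁 and let 𝐓 = T × T × ⋯ be the coordinatewise product map on X = Y^ℕ. Then for every n, μ(𝐓 𝐁^n ∩ 𝐁^n) = (∏_{j=1}^n γ(B_j)^{-1}) · ∏_{j>n} (γ(B_j ∩ T B_j)/γ(B_j)), and consequently μ(𝐓 𝐁^n ∩ 𝐁^n)/μ(𝐁^n)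 → 1 as n → ∞. -/
open MeasureTheory Filter Topology Set ENNReal

noncomputable section

/-! The coordinatewise image of `𝐁ⁿ` under `𝐓` meets `𝐁ⁿ` in the tail cylinder of the sets
`B j ∩ T (B j)`; its measure follows from the cylinder formula by continuity from above, letting
the number of constrained coordinates tend to infinity. Since `1 - ∏ aₖ ≤ ∑ (1 - aₖ)` for factors
`aₖ ≤ 1`, and `1 - γ (B j ∩ T (B j)) / γ (B j) ≤ γ (B j ∆ T (B j)) / γ (B j)`, the summability
hypothesis makes the tails of the product tend to `1`. -/

namespace ENNReal

open Finset

theorem one_le_prod_add_sum_one_sub {ι : Type*} {f : ι → ℝ≥0∞} (hf : ∀ i, f i ≤ 1)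
    (s : Finset ι) : 1 ≤ ∏ i ∈ s, f i + ∑ i ∈ s, (1 - f i) := by
  classical
  induction s using Finset.induction_on with
  | empty => simp
  | insert a s ha ih =>
    have hP : ∏ i ∈ s, f i ≤ 1 := prod_le_one' fun i _ => hf i
    calc 1 ≤ ∏ i ∈ s, f i + ∑ i ∈ s, (1 - f i) := ih
      _ = (f a + (1 - f a)) * ∏ i ∈ s, f i + ∑ i ∈ s, (1 - f i) := by
        rw [add_tsub_cancel_of_le (hf a), one_mul]
      _ ≤ f a * ∏ i ∈ s, f i + (1 - f a) + ∑ i ∈ s, (1 - f i) := by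
        rw [add_mul]
        gcongr
        exact mul_le_of_le_one_right' hP
      _ = ∏ i ∈ insert a s, f i + ∑ i ∈ insert a s, (1 - f i) := by
        rw [prod_insert ha, sum_insert ha, add_assoc]

theorem one_le_tprod_add_tsum_one_sub {ι : Type*} {f : ι → ℝ≥0∞} (hf : ∀ i, f i ≤ 1) :
    1 ≤ ∏' i, f i + ∑' i, (1 - f i) := by
  rw [tprod_eq_iInf_prod hf, iInf_add]
  exact le_iInf fun s =>
    (one_le_prod_add_sum_one_sub hf s).trans (add_le_add_right (ENNReal.sum_le_tsum s) _)

theorem tendsto_tprod_nat_add {f : ℕ → ℝ≥0∞} (hf : ∀ i, f i ≤ 1)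
    (hsum : ∑' i, (1 - f i) ≠ ∞) :
    Tendsto (fun n => ∏' k, f (n + k)) atTop (𝓝 1) := by
  have htail : Tendsto (fun n => ∑' k, (1 - f (n + k))) atTop (𝓝 0) := by
    simpa only [add_comm] using tendsto_sum_nat_add (fun i => 1 - f i) hsum
  have hlower : Tendsto (fun n => 1 - ∑' k, (1 - f (n + k))) atTop (𝓝 1) := by
    simpa using ENNReal.Tendsto.sub tendsto_const_nhds htail (Or.inl one_ne_top)
  refine tendsto_of_tendsto_of_tendsto_of_le_of_le hlower tendsto_const_nhds (fun n => ?_)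
    (fun n => tprod_le_one fun k => hf (n + k))
  exact tsub_le_iff_right.mpr (one_le_tprod_add_tsum_one_sub fun k => hf (n + k))

end ENNReal

section TailCylinder

variable {α β : Type*}

theorem image_tailCylinder {f : α → β} (hf : Function.Surjective f) (B : ℕ → Set α) (n : ℕ) :
    (fun (x : ℕ → α) (j : ℕ) => f (x j)) '' tailCylinder B n
      = tailCylinder (fun j => f '' B j) n := by
  ext y
  constructor
  · rintro ⟨x, hx, rfl⟩ j hj
    exact ⟨x j, hx j hj, rfl⟩
  · intro hy
    have hpre : ∀ j, ∃ a, (n ≤ j → a ∈ B j) ∧ f a = y j := fun j => by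
      by_cases hj : n ≤ j
      · obtain ⟨a, ha, hay⟩ := hy j hj
        exact ⟨a, fun _ => ha, hay⟩
      · obtain ⟨a, hay⟩ := hf (y j)
        exact ⟨a, fun h => absurd h hj, hay⟩
    choose x hxB hxy using hpre
    exact ⟨x, hxB, funext hxy⟩

theorem tailCylinder_inter (B C : ℕ → Set α) (n : ℕ) :
    tailCylinder B n ∩ tailCylinder C n = tailCylinder (fun j => B j ∩ C j) n := by
  ext x
  simp only [tailCylinder, mem_inter_iff, mem_ofPred_eq]
  exact ⟨fun h j hj => ⟨h.1 j hj, h.2 j hj⟩,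
    fun h => ⟨fun j hj => (h j hj).1, fun j hj => (h j hj).2⟩⟩

end TailCylinder

section RestrictedInfinitePower

open Finset

variable {Y : Type*} [MeasurableSpace Y]

/-- `μ` is the restricted infinite power `γ^𝐁`, described on the cylinders
`C 0 × ⋯ × C (m-1) × B m × B (m+1) × ⋯`. -/
def IsRestrictedInfinitePower (γ : Measure Y) (B : ℕ → Set Y) (μ : Measure (ℕ → Y)) : Prop :=
  ∀ (m : ℕ) (C : ℕ → Set Y), (∀ j, MeasurableSet (C j)) → (∀ j, m ≤ j → C j = B j) →
    μ {x : ℕ → Y | ∀ j, x j ∈ C j} = ∏ j ∈ Finset.range m, γ (C j) / γ (B j)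

namespace IsRestrictedInfinitePower

variable {γ : Measure Y} [IsProbabilityMeasure γ] {B : ℕ → Set Y} {μ : Measure (ℕ → Y)}

theorem measure_tailCylinder_of_subset (hμ : IsRestrictedInfinitePower γ B μ)
    (hB : ∀ j, MeasurableSet (B j)) (hB0 : ∀ j, γ (B j) ≠ 0) {C : ℕ → Set Y}
    (hC : ∀ j, MeasurableSet (C j)) (hCB : ∀ j, C j ⊆ B j) (n : ℕ) :
    μ (tailCylinder C n)
      = (∏ j ∈ range n, γ (B j))⁻¹ * ∏' k, γ (C (n + k)) / γ (B (n + k)) := by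
  -- `E m` constrains the coordinates `n ≤ j < n + m` to `C j` and the later ones to `B j`.
  set E : ℕ → ℕ → Set Y := fun m j => if j < n then univ else if j < n + m then C j else B j
  have hE : ∀ m j, MeasurableSet (E m j) := fun m j => by
    simp only [E]; split_ifs <;> first | exact MeasurableSet.univ | exact hC j | exact hB j
  have hμE : ∀ m, μ {x | ∀ j, x j ∈ E m j}
      = (∏ j ∈ range n, γ (B j))⁻¹ * ∏ k ∈ range m, γ (C (n + k)) / γ (B (n + k)) := by
    intro m
    rw [hμ (n + m) (E m) (hE m) (fun j hj => by simp only [E]; rw [if_neg (by omega),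
      if_neg (by omega)]), prod_range_add, ENNReal.prod_inv_distrib
      (fun i _ j _ _ => Or.inr (measure_ne_top γ _))]
    congr 1 <;> refine prod_congr rfl fun j hj => ?_ <;> rw [Finset.mem_range] at hj <;>
      simp only [E]
    · rw [if_pos hj, measure_univ, one_div]
    · rw [if_neg (by omega), if_pos (by omega)]
  have hanti : Antitone fun m => {x : ℕ → Y | ∀ j, x j ∈ E m j} := by
    intro m m' hm x hx j
    have hxj := hx j
    simp only [E] at hxj ⊢
    split_ifs at hxj ⊢ <;> first | trivial | omega | exact hxj | exact hCB j hxj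
  have hinter : ⋂ m, {x : ℕ → Y | ∀ j, x j ∈ E m j} = tailCylinder C n := by
    ext x
    simp only [mem_iInter, mem_ofPred_eq, tailCylinder, E]
    refine ⟨fun h j hj => ?_, fun h m j => ?_⟩
    · have hj' := h (j + 1 - n) j
      rwa [if_neg (by omega), if_pos (by omega)] at hj'
    · split_ifs <;> first | trivial | exact h j (by omega) | exact hCB j (h j (by omega))
  have hfinite : (∏ j ∈ range n, γ (B j))⁻¹ ≠ ∞ :=
    ENNReal.inv_ne_top.mpr (prod_ne_zero_iff.mpr fun j _ => hB0 j)
  have hEm : ∀ m, MeasurableSet {x : ℕ → Y | ∀ j, x j ∈ E m j} := fun m => by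
    rw [ofPred_forall]; exact .iInter fun j => measurable_pi_apply j (hE m j)
  have hlim := tendsto_measure_iInter_atTop (μ := μ) (fun m => (hEm m).nullMeasurableSet) hanti
    ⟨0, by rw [hμE 0, Finset.prod_range_zero, mul_one]; exact hfinite⟩
  have hratio : ∀ k, γ (C (n + k)) / γ (B (n + k)) ≤ 1 := fun k =>
    (ENNReal.div_le_div_right (measure_mono (hCB (n + k))) _).trans ENNReal.div_self_le_one
  have hprod := (ENNReal.multipliable_of_le_one hratio).hasProd
  rw [← hinter]
  exact tendsto_nhds_unique hlim ((ENNReal.Tendsto.const_mul hprod.tendsto_prod_nat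
    (Or.inr hfinite)).congr fun m => (hμE m).symm)

theorem measure_tailCylinder (hμ : IsRestrictedInfinitePower γ B μ)
    (hB : ∀ j, MeasurableSet (B j)) (hB0 : ∀ j, γ (B j) ≠ 0) (n : ℕ) :
    μ (tailCylinder B n) = (∏ j ∈ range n, γ (B j))⁻¹ := by
  simpa [ENNReal.div_self (hB0 _) (measure_ne_top γ _)] using
    hμ.measure_tailCylinder_of_subset hB hB0 hB (fun _ => subset_rfl) n

end IsRestrictedInfinitePower

theorem one_sub_measure_inter_div_le (γ : Measure Y) {s : Set Y} (h0 : γ s ≠ 0) (htop : γ s ≠ ∞)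
    (t : Set Y) : 1 - γ (s ∩ t) / γ s ≤ γ (symmDiff s t) / γ s := by
  rw [tsub_le_iff_right, ← ENNReal.div_self h0 htop, ← ENNReal.add_div]
  refine ENNReal.div_le_div_right ((measure_mono fun y hy => ?_).trans (measure_union_le _ _)) _
  by_cases hyt : y ∈ t
  · exact Or.inr ⟨hy, hyt⟩
  · exact Or.inl (Or.inl ⟨hy, hyt⟩)

end RestrictedInfinitePower

theorem measure_prodMap_tailCylinder_inter_general {Y : Type*} [MeasurableSpace Y]
    (γ : Measure Y) [IsProbabilityMeasure γ]
    (B : ℕ → Set Y) (hBm : ∀ n, MeasurableSet (B n)) (hBpos : ∀ n, 0 < γ (B n))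
    (T : Y ≃ᵐ Y)
    (hsum : (∑' n, γ (symmDiff (B n) (⇑T '' B n)) / γ (B n)) ≠ ∞)
    (μ : Measure (ℕ → Y))
    (hcyl : ∀ (m : ℕ) (C : ℕ → Set Y), (∀ j, MeasurableSet (C j)) →
      (∀ j, m ≤ j → C j = B j) →
      μ {x : ℕ → Y | ∀ j, x j ∈ C j} = ∏ j ∈ Finset.range m, γ (C j) / γ (B j)) :
    (∀ n : ℕ,
      μ ((fun (x : ℕ → Y) (j : ℕ) => T (x j)) '' tailCylinder B n ∩ tailCylinder B n)
        = (∏ j ∈ Finset.range n, γ (B j))⁻¹ *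
            ∏' k : ℕ, γ (B (n + k) ∩ ⇑T '' B (n + k)) / γ (B (n + k))) ∧
      Tendsto (fun n : ℕ =>
          μ ((fun (x : ℕ → Y) (j : ℕ) => T (x j)) '' tailCylinder B n ∩ tailCylinder B n)
            / μ (tailCylinder B n)) atTop (𝓝 1) := by
  have hμ : IsRestrictedInfinitePower γ B μ := hcyl
  have hB0 : ∀ j, γ (B j) ≠ 0 := fun j => (hBpos j).ne'
  have hformula : ∀ n : ℕ,
      μ ((fun (x : ℕ → Y) (j : ℕ) => T (x j)) '' tailCylinder B n ∩ tailCylinder B n)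
        = (∏ j ∈ Finset.range n, γ (B j))⁻¹ *
            ∏' k : ℕ, γ (B (n + k) ∩ ⇑T '' B (n + k)) / γ (B (n + k)) := fun n => by
    rw [image_tailCylinder T.surjective, inter_comm, tailCylinder_inter]
    exact hμ.measure_tailCylinder_of_subset hBm hB0
      (fun j => (hBm j).inter (T.measurableSet_image.mpr (hBm j))) (fun _ => inter_subset_left) n
  refine ⟨hformula, ?_⟩
  have hprefix : ∀ n, (∏ j ∈ Finset.range n, γ (B j))⁻¹ ≠ 0 := fun n =>
    ENNReal.inv_ne_zero.mpr (ENNReal.prod_ne_top fun j _ => measure_ne_top γ _)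
  have hprefix' : ∀ n, (∏ j ∈ Finset.range n, γ (B j))⁻¹ ≠ ∞ := fun n =>
    ENNReal.inv_ne_top.mpr (Finset.prod_ne_zero_iff.mpr fun j _ => hB0 j)
  have hdefect : ∑' j, (1 - γ (B j ∩ ⇑T '' B j) / γ (B j)) ≠ ∞ :=
    ne_top_of_le_ne_top hsum (ENNReal.tsum_le_tsum fun j =>
      one_sub_measure_inter_div_le γ (hB0 j) (measure_ne_top γ _) _)
  refine (ENNReal.tendsto_tprod_nat_add
    (fun j => (ENNReal.div_le_div_right (measure_mono inter_subset_left) _).trans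
      ENNReal.div_self_le_one)
    hdefect).congr fun n => ?_
  rw [hformula, hμ.measure_tailCylinder hBm hB0, mul_comm,
    ENNReal.mul_div_cancel_right (hprefix n) (hprefix' n)]

/-- **Formula (1-1).** Under the assumptions of Proposition 1.6, the measure of
`𝐓 𝐁ⁿ ∩ 𝐁ⁿ` equals `(∏_{j<n} γ (B j))⁻¹ ⬝ ∏_{j≥n} γ (B j ∩ T (B j)) / γ (B j)`, and the
ratio `μ (𝐓 𝐁ⁿ ∩ 𝐁ⁿ) / μ 𝐁ⁿ` tends to `1`. -/
theorem measure_prodMap_tailCylinder_inter {Y : Type*} [MeasurableSpace Y]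
    [StandardBorelSpace Y]
    (γ : Measure Y) [IsProbabilityMeasure γ] (hna : ∀ y : Y, γ {y} = 0)
    (B : ℕ → Set Y) (hBm : ∀ n, MeasurableSet (B n)) (hBpos : ∀ n, 0 < γ (B n))
    (T : Y ≃ᵐ Y) (hT : MeasurePreserving T γ γ)
    (hsum : (∑' n, γ (symmDiff (B n) (⇑T '' B n)) / γ (B n)) ≠ ∞)
    (μ : Measure (ℕ → Y))
    (hcyl : ∀ (m : ℕ) (C : ℕ → Set Y), (∀ j, MeasurableSet (C j)) →
      (∀ j, m ≤ j → C j = B j) →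
      μ {x : ℕ → Y | ∀ j, x j ∈ C j} = ∏ j ∈ Finset.range m, γ (C j) / γ (B j))
    (hsupp : μ ((⋃ n, tailCylinder B n)ᶜ) = 0) :
    (∀ n : ℕ,
      μ ((fun (x : ℕ → Y) (j : ℕ) => T (x j)) '' tailCylinder B n ∩ tailCylinder B n)
        = (∏ j ∈ Finset.range n, γ (B j))⁻¹ *
            ∏' k : ℕ, γ (B (n + k) ∩ ⇑T '' B (n + k)) / γ (B (n + k))) ∧
      Tendsto (fun n : ℕ =>
          μ ((fun (x : ℕ → Y) (j : ℕ) => T (x j)) '' tailCylinder B n ∩ tailCylinder B n)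
            / μ (tailCylinder B n)) atTop (𝓝 1) :=
  measure_prodMap_tailCylinder_inter_general γ B hBm hBpos T hsum μ hcyl
end
end
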